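/- arXiv:1310.4724 — 7 statements merged into one kernel-verified Lean document; each statement's English description precedes it below -/
import Mathlib

section
/- Let v = e^{2πi/3}, 0 < λ < 1, and define f_C(z) = 1 + λ(1+v)z and f_E(z) = -v - λvz on ℂ. If z = λ⁻¹v + av + b(1+v) with a, b > 0, then f_E(z) = 1 + λa(1+v) + λb. In particular, f_E maps the region E = {λ⁻¹v + av + b(1+v) : a,b > 0} into the set {α + β(1+v) : α > 1, β > 0}. -/
theorem Complex.exp_two_pi_I_div_three_sq_add_add_one :
    Complex.exp (2 * Real.pi * Complex.I / 3) ^ 2 + Complex.exp (2 * Real.pi * Complex.I / 3) + 1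
      = 0 := by
  have h := (Complex.isPrimitiveRoot_exp 3 (by norm_num)).geom_sum_eq_zero (by norm_num)
  simp only [Finset.sum_range_succ, Finset.sum_range_zero] at h
  push_cast at h
  linear_combination h

theorem neg_sub_mul_mul_eq_of_sq_add_add_one {K : Type*} [Field K] {v lam : K}
    (hv : v ^ 2 + v + 1 = 0) (hlam : lam ≠ 0) (a b : K) :
    -v - lam * v * (lam⁻¹ * v + a * v + b * (1 + v)) = 1 + lam * a * (1 + v) + lam * b := by
  linear_combination (-1 - lam * a - lam * b) * hv - v ^ 2 * mul_inv_cancel₀ hlam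

theorem stmt7_general (lam : ℝ) (h0 : 0 < lam)
    (v : ℂ) (hv : v = Complex.exp (2 * Real.pi * Complex.I / 3))
    (fE : ℂ → ℂ) (hfE : ∀ z, fE z = -v - (lam : ℂ) * v * z) :
    (∀ a b : ℝ, 0 < a → 0 < b →
      fE ((lam : ℂ)⁻¹ * v + (a : ℂ) * v + (b : ℂ) * (1 + v)) =
        1 + (lam : ℂ) * (a : ℂ) * (1 + v) + (lam : ℂ) * (b : ℂ)) ∧
    (∀ z : ℂ, (∃ a b : ℝ, 0 < a ∧ 0 < b ∧
        z = (lam : ℂ)⁻¹ * v + (a : ℂ) * v + (b : ℂ) * (1 + v)) →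
      ∃ α β : ℝ, 1 < α ∧ 0 < β ∧ fE z = (α : ℂ) + (β : ℂ) * (1 + v)) := by
  have hv2 : v ^ 2 + v + 1 = 0 := hv ▸ Complex.exp_two_pi_I_div_three_sq_add_add_one
  have hlam : (lam : ℂ) ≠ 0 := by exact_mod_cast h0.ne'
  have key (a b : ℝ) : fE ((lam : ℂ)⁻¹ * v + (a : ℂ) * v + (b : ℂ) * (1 + v)) =
      1 + (lam : ℂ) * (a : ℂ) * (1 + v) + (lam : ℂ) * (b : ℂ) := by
    rw [hfE, neg_sub_mul_mul_eq_of_sq_add_add_one hv2 hlam]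
  refine ⟨fun a b _ _ => key a b, ?_⟩
  rintro z ⟨a, b, ha, hb, rfl⟩
  refine ⟨1 + lam * b, lam * a, lt_add_of_pos_right 1 (mul_pos h0 hb), by positivity, ?_⟩
  rw [key]
  push_cast
  ring

theorem stmt7 (lam : ℝ) (h0 : 0 < lam) (h1 : lam < 1)
    (v : ℂ) (hv : v = Complex.exp (2 * Real.pi * Complex.I / 3))
    (fE : ℂ → ℂ) (hfE : ∀ z, fE z = -v - (lam : ℂ) * v * z) :
    (∀ a b : ℝ, 0 < a → 0 < b →
      fE ((lam : ℂ)⁻¹ * v + (a : ℂ) * v + (b : ℂ) * (1 + v)) =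
        1 + (lam : ℂ) * (a : ℂ) * (1 + v) + (lam : ℂ) * (b : ℂ)) ∧
    (∀ z : ℂ, (∃ a b : ℝ, 0 < a ∧ 0 < b ∧
        z = (lam : ℂ)⁻¹ * v + (a : ℂ) * v + (b : ℂ) * (1 + v)) →
      ∃ α β : ℝ, 1 < α ∧ 0 < β ∧ fE z = (α : ℂ) + (β : ℂ) * (1 + v)) :=
  stmt7_general lam h0 v hv fE hfE
end

section
/- Let v = e^{2πi/3}, 0 < λ < 1, and f_C(z) = 1 + λ(1+v)z. If z = a + b(1+v) with a > -λ⁻¹, a + b > 0 and 0 < b < λ⁻¹ + λ⁻², then f_C(z) = α + β(1+v) with α = 1 - λb and β = λ(a+b); moreover -λ⁻¹ < α < 1, β > 0 and α + β > 0. -/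
/-!
Since `v` is a primitive cube root of unity, `1 + v + v² = 0`, i.e. `(1 + v)² = v = (1 + v) - 1`.
Hence multiplying `a + b(1 + v)` by `1 + v` gives `-b + (a + b)(1 + v)`, which yields the coordinates
of `f_C(z)`; the inequalities are then linear consequences of the hypotheses after scaling by `λ`.
-/

open Complex

lemma IsPrimitiveRoot.one_add_sq_of_three {R : Type*} [CommRing R] [IsDomain R] {v : R}
    (hv : IsPrimitiveRoot v 3) : (1 + v) ^ 2 = v := by
  have hsum := hv.geom_sum_eq_zero (by norm_num)
  simp only [Finset.sum_range_succ, Finset.sum_range_zero] at hsum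
  linear_combination hsum

lemma one_add_mul_one_add_mul_eq {R : Type*} [CommRing R] {v : R} (hv : (1 + v) ^ 2 = v)
    (l a b : R) : 1 + l * (1 + v) * (a + b * (1 + v)) = (1 - l * b) + l * (a + b) * (1 + v) := by
  linear_combination l * b * hv

lemma strip_image_bounds {lam a b : ℝ} (h0 : 0 < lam) (ha : -lam⁻¹ < a) (hab : 0 < a + b)
    (hb0 : 0 < b) (hb1 : b < lam⁻¹ + lam⁻¹ ^ 2) :
    -lam⁻¹ < 1 - lam * b ∧ 1 - lam * b < 1 ∧ 0 < lam * (a + b) ∧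
      0 < (1 - lam * b) + lam * (a + b) := by
  have hlam : lam * lam⁻¹ = 1 := mul_inv_cancel₀ h0.ne'
  have hb1' : lam * b < 1 + lam⁻¹ := by
    calc lam * b < lam * (lam⁻¹ + lam⁻¹ ^ 2) := mul_lt_mul_of_pos_left hb1 h0
      _ = 1 + lam⁻¹ := by linear_combination (1 + lam⁻¹) * hlam
  have ha' : -1 < lam * a := by
    calc -1 = lam * -lam⁻¹ := by linear_combination hlam
      _ < lam * a := mul_lt_mul_of_pos_left ha h0
  refine ⟨by linarith, by linarith [mul_pos h0 hb0], mul_pos h0 hab, by linarith⟩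

theorem stmt9_general (lam : ℝ) (h0 : 0 < lam)
    (v : ℂ) (hv : v = Complex.exp (2 * Real.pi * Complex.I / 3))
    (fC : ℂ → ℂ) (hfC : ∀ z, fC z = 1 + (lam : ℂ) * (1 + v) * z)
    (a b : ℝ) (ha : -lam⁻¹ < a) (hab : 0 < a + b)
    (hb0 : 0 < b) (hb1 : b < lam⁻¹ + lam⁻¹ ^ 2) :
    fC ((a : ℂ) + (b : ℂ) * (1 + v)) =
      ((1 - lam * b : ℝ) : ℂ) + ((lam * (a + b) : ℝ) : ℂ) * (1 + v) ∧
    -lam⁻¹ < 1 - lam * b ∧ 1 - lam * b < 1 ∧ 0 < lam * (a + b) ∧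
    0 < (1 - lam * b) + lam * (a + b) := by
  have hprim : IsPrimitiveRoot v 3 := by
    simpa [hv] using isPrimitiveRoot_exp 3 (by norm_num)
  refine ⟨?_, strip_image_bounds h0 ha hab hb0 hb1⟩
  rw [hfC, one_add_mul_one_add_mul_eq hprim.one_add_sq_of_three]
  push_cast
  ring

theorem stmt9 (lam : ℝ) (h0 : 0 < lam) (h1 : lam < 1)
    (v : ℂ) (hv : v = Complex.exp (2 * Real.pi * Complex.I / 3))
    (fC : ℂ → ℂ) (hfC : ∀ z, fC z = 1 + (lam : ℂ) * (1 + v) * z)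
    (a b : ℝ) (ha : -lam⁻¹ < a) (hab : 0 < a + b)
    (hb0 : 0 < b) (hb1 : b < lam⁻¹ + lam⁻¹ ^ 2) :
    fC ((a : ℂ) + (b : ℂ) * (1 + v)) =
      ((1 - lam * b : ℝ) : ℂ) + ((lam * (a + b) : ℝ) : ℂ) * (1 + v) ∧
    -lam⁻¹ < 1 - lam * b ∧ 1 - lam * b < 1 ∧ 0 < lam * (a + b) ∧
    0 < (1 - lam * b) + lam * (a + b) :=
  stmt9_general lam h0 v hv fC hfC a b ha hab hb0 hb1
end

section
/- For every integer n ≥ 1, the polynomial p_{2n-1}(x) = 1 - x^{2n-2} - x^{2n-1} + x^{4n-2} satisfies: the fixed point z_n of ψ_n lies in B_n if and only if p_{2n-1}(λ) < 0; equivalently, λ²(1 - λ^{2n-2}) < λ^{4n-1}(1-λ^{2n-1})/(1 - λ^{2n-1} + λ^{4n-2}) holds iff 1 - λ^{2n-2} - λ^{2n-1} + λ^{4n-2} < 0. Moreover the inequality λ^{4n-1}(1-λ^{2n-1})/(1-λ^{2n-1}+λ^{4n-2}) < 1 - λ^{2n} holds for all λ ∈ (0,1). -/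
/-!
Put `a = 2n - 2` and `D = 1 - λ^{a+1} + λ^{2a+2}`, which is positive. Both sums are geometric:
`∑_{j=2}^{a+1} λ^{-j} = (1 - λ^a) / ((1 - λ) λ^{a+1})`. After clearing the positive denominators, the
lower bound for `a_n + b_n` and the inequality `λ²(1 - λ^a) < frac` both become
`(1 - λ^a) D < λ^{2a+1} (1 - λ^{a+1})`, and the difference of the two sides is exactly
`p_{2n-1}(λ) = 1 - λ^a - λ^{a+1} + λ^{2a+2}`. The upper bound for `a_n + b_n` and the bound
`frac < 1 - λ^{2n}` both amount to `λ y² (1 - y) < (1 - λ y) (1 - y + y²)` for `y = λ^{a+1}`, whose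
two sides differ by `(1 - y)² + y (1 - λ)`.
-/

open Finset

theorem sum_Icc_two_inv_pow {x : ℝ} (hx0 : x ≠ 0) (hx1 : x ≠ 1) (N : ℕ) :
    ∑ j ∈ Icc 2 (N + 1), x⁻¹ ^ j = (1 - x ^ N) / ((1 - x) * x ^ (N + 1)) := by
  have hinv : x⁻¹ ≠ 1 := inv_ne_one.mpr hx1
  have hsub : 1 - x ≠ 0 := sub_ne_zero.mpr hx1.symm
  rw [← Ico_add_one_right_eq_Icc, geom_sum_Ico hinv (by omega), inv_pow, inv_pow]
  field_simp
  ring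

theorem one_sub_pow_add_pow_pos (x : ℝ) (a : ℕ) : 0 < 1 - x ^ (a + 1) + x ^ (2 * a + 2) := by
  rw [show 2 * a + 2 = (a + 1) * 2 by ring, pow_mul]
  nlinarith [sq_nonneg (2 * x ^ (a + 1) - 1)]

theorem mul_sq_mul_one_sub_lt {x y : ℝ} (hx : x < 1) (hy : 0 < y) :
    x * y ^ 2 * (1 - y) < (1 - x * y) * (1 - y + y ^ 2) := by
  nlinarith [sq_nonneg (1 - y), mul_pos hy (sub_pos.mpr hx)]

section

variable {x : ℝ} (a : ℕ)

theorem one_sub_pow_mul_lt_iff :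
    (1 - x ^ a) * (1 - x ^ (a + 1) + x ^ (2 * a + 2)) < x ^ (2 * a + 1) * (1 - x ^ (a + 1)) ↔
      1 - x ^ a - x ^ (a + 1) + x ^ (2 * a + 2) < 0 := by
  have hdiff : (1 - x ^ a) * (1 - x ^ (a + 1) + x ^ (2 * a + 2)) -
      x ^ (2 * a + 1) * (1 - x ^ (a + 1)) = 1 - x ^ a - x ^ (a + 1) + x ^ (2 * a + 2) := by
    ring
  rw [← sub_neg, hdiff]

theorem pow_mul_one_sub_pow_lt (h0 : 0 < x) (h1 : x < 1) :
    x ^ (2 * a + 3) * (1 - x ^ (a + 1)) <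
      (1 - x ^ (a + 2)) * (1 - x ^ (a + 1) + x ^ (2 * a + 2)) := by
  convert mul_sq_mul_one_sub_lt h1 (pow_pos h0 (a + 1)) using 2 <;> ring

theorem sum_Icc_two_inv_pow_lt_iff (h0 : 0 < x) (h1 : x < 1) :
    ∑ j ∈ Icc 2 (a + 1), x⁻¹ ^ j <
        (x ^ a - x ^ (2 * a + 1)) / ((1 - x) * (1 - x ^ (a + 1) + x ^ (2 * a + 2))) ↔
      1 - x ^ a - x ^ (a + 1) + x ^ (2 * a + 2) < 0 := by
  have hx : 0 < 1 - x := sub_pos.mpr h1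
  rw [sum_Icc_two_inv_pow h0.ne' h1.ne a, div_lt_div_iff₀ (by positivity)
    (mul_pos hx (one_sub_pow_add_pow_pos x a))]
  convert (mul_lt_mul_iff_of_pos_left hx).trans (one_sub_pow_mul_lt_iff a)
    using 2 <;> ring

theorem lt_sum_Icc_two_inv_pow (h0 : 0 < x) (h1 : x < 1) :
    (x ^ a - x ^ (2 * a + 1)) / ((1 - x) * (1 - x ^ (a + 1) + x ^ (2 * a + 2))) <
      ∑ j ∈ Icc 2 (a + 3), x⁻¹ ^ j := by
  have hx : 0 < 1 - x := sub_pos.mpr h1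
  rw [show a + 3 = a + 2 + 1 from rfl, sum_Icc_two_inv_pow h0.ne' h1.ne (a + 2),
    div_lt_div_iff₀ (mul_pos hx (one_sub_pow_add_pow_pos x a)) (by positivity)]
  convert mul_lt_mul_of_pos_left (pow_mul_one_sub_pow_lt a h0 h1) hx using 1 <;> ring

theorem sq_mul_one_sub_pow_lt_div_iff (h0 : 0 < x) :
    x ^ 2 * (1 - x ^ a) <
        x ^ (2 * a + 3) * (1 - x ^ (a + 1)) / (1 - x ^ (a + 1) + x ^ (2 * a + 2)) ↔
      1 - x ^ a - x ^ (a + 1) + x ^ (2 * a + 2) < 0 := by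
  rw [lt_div_iff₀ (one_sub_pow_add_pow_pos x a)]
  convert (mul_lt_mul_iff_of_pos_left (pow_pos h0 2)).trans (one_sub_pow_mul_lt_iff a)
    using 2 <;> ring

theorem div_lt_one_sub_pow (h0 : 0 < x) (h1 : x < 1) :
    x ^ (2 * a + 3) * (1 - x ^ (a + 1)) / (1 - x ^ (a + 1) + x ^ (2 * a + 2)) <
      1 - x ^ (a + 2) := by
  rw [div_lt_iff₀ (one_sub_pow_add_pow_pos x a)]
  exact pow_mul_one_sub_pow_lt a h0 h1

end

theorem stmt12 (lam : ℝ) (h0 : 0 < lam) (h1 : lam < 1) (n : ℕ) (hn : 1 ≤ n)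
    (s : ℝ) (hsdef : s = (lam ^ (2 * n - 2) - lam ^ (4 * n - 3)) /
      ((1 - lam) * (1 - lam ^ (2 * n - 1) + lam ^ (4 * n - 2))))
    (frac : ℝ) (hfrac : frac = lam ^ (4 * n - 1) * (1 - lam ^ (2 * n - 1)) /
      (1 - lam ^ (2 * n - 1) + lam ^ (4 * n - 2))) :
    (((∑ j ∈ Finset.Icc 2 (2 * n - 1), lam⁻¹ ^ j) < s ∧
        s < ∑ j ∈ Finset.Icc 2 (2 * n + 1), lam⁻¹ ^ j) ↔
      1 - lam ^ (2 * n - 2) - lam ^ (2 * n - 1) + lam ^ (4 * n - 2) < 0) ∧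
    ((lam ^ 2 * (1 - lam ^ (2 * n - 2)) < frac) ↔
      1 - lam ^ (2 * n - 2) - lam ^ (2 * n - 1) + lam ^ (4 * n - 2) < 0) ∧
    frac < 1 - lam ^ (2 * n) := by
  subst hsdef hfrac
  set a := 2 * n - 2
  rw [show 2 * n - 1 = a + 1 by omega, show 4 * n - 3 = 2 * a + 1 by omega,
    show 4 * n - 2 = 2 * a + 2 by omega, show 4 * n - 1 = 2 * a + 3 by omega,
    show 2 * n + 1 = a + 3 by omega, show 2 * n = a + 2 by omega]
  refine ⟨⟨fun h => (sum_Icc_two_inv_pow_lt_iff a h0 h1).mp h.1,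
    fun hp => ⟨(sum_Icc_two_inv_pow_lt_iff a h0 h1).mpr hp, lt_sum_Icc_two_inv_pow a h0 h1⟩⟩,
    sq_mul_one_sub_pow_lt_div_iff a h0, div_lt_one_sub_pow a h0 h1⟩
end

section
/- For each n ≥ 1, the polynomial p_n(x) = x^{2n} - xⁿ - x^{n-1} + 1 has exactly one root λ_n in [0,1); moreover p_n(x) < 0 for all x ∈ (λ_n, 1), the sequence (λ_n) is strictly increasing, and λ_n → 1 as n → ∞. -/
/-!
Write `p_n(x) = (x - 1) q_n(x)` with `q_n(x) = xⁿ (1 + ⋯ + x^{n-1}) - (1 + ⋯ + x^{n-2})`.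
On `(0, 1)` the ratio `xⁿ (1 + ⋯ + x^{n-1}) / (1 + ⋯ + x^{n-2})` is strictly increasing, since
every power of `x` in the numerator exceeds every power in the denominator; so once `q_n` vanishes
it stays positive, i.e. `p_n` stays negative. This gives uniqueness and the sign of `p_n`, while
`q_n(0) = -1 < 0 < 1 = q_n(1)` gives existence. The identity
`p_{n+1}(x) = x p_n(x) + (1 - x)(1 - x^{2n+1})` shows `p_{n+1}(λ_n) > 0`, hence `λ_n < λ_{n+1}`,
and `p_n(y) ≥ 1 - 2 y^{n-1} > 0` for large `n` shows `λ_n > y` eventually, for every `y < 1`.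
-/

open Finset Filter Topology

section OrderedRing

variable {R : Type*} [CommSemiring R] [LinearOrder R] [IsStrictOrderedRing R]

lemma pow_mul_pow_lt_pow_mul_pow {a b : R} (ha : 0 < a) (hab : a < b) {i k : ℕ} (hki : k < i) :
    a ^ i * b ^ k < b ^ i * a ^ k := by
  obtain ⟨d, rfl⟩ := Nat.exists_eq_add_of_lt hki
  have hd : a ^ (d + 1) < b ^ (d + 1) := pow_lt_pow_left₀ hab ha.le d.succ_ne_zero
  have hak : 0 < a ^ k * b ^ k := by have := ha.trans hab; positivity
  calc a ^ (k + d + 1) * b ^ k = a ^ k * b ^ k * a ^ (d + 1) := by ring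
    _ < a ^ k * b ^ k * b ^ (d + 1) := mul_lt_mul_of_pos_left hd hak
    _ = b ^ (k + d + 1) * a ^ k := by ring

/-- The ratio `xⁿ (1 + ⋯ + x^{r-1}) / (1 + ⋯ + x^{s-1})` is strictly increasing on `(0, ∞)`
when `s ≤ n`, written without division. -/
lemma pow_mul_geomSum_mul_geomSum_lt {a b : R} (ha : 0 < a) (hab : a < b) {n r s : ℕ}
    (hr : 0 < r) (hs : 0 < s) (hsn : s ≤ n) :
    a ^ n * (∑ j ∈ range r, a ^ j) * ∑ k ∈ range s, b ^ k <
      b ^ n * (∑ j ∈ range r, b ^ j) * ∑ k ∈ range s, a ^ k := by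
  have expand : ∀ c d : R, c ^ n * (∑ j ∈ range r, c ^ j) * ∑ k ∈ range s, d ^ k =
      ∑ j ∈ range r, ∑ k ∈ range s, c ^ (n + j) * d ^ k := by
    intro c d
    rw [mul_assoc, sum_mul_sum, mul_sum]
    simp only [mul_sum, pow_add, mul_assoc]
  rw [expand, expand]
  refine sum_lt_sum_of_nonempty (nonempty_range_iff.2 hr.ne') fun j _ => ?_
  refine sum_lt_sum_of_nonempty (nonempty_range_iff.2 hs.ne') fun k hk => ?_
  exact pow_mul_pow_lt_pow_mul_pow ha hab (by have := mem_range.1 hk; omega)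

end OrderedRing

def billiardPoly (n : ℕ) (x : ℝ) : ℝ := x ^ (2 * n) - x ^ n - x ^ (n - 1) + 1

def billiardQuot (n : ℕ) (x : ℝ) : ℝ :=
  x ^ n * ∑ j ∈ range n, x ^ j - ∑ k ∈ range (n - 1), x ^ k

lemma billiardPoly_eq_sub_one_mul (n : ℕ) (x : ℝ) :
    billiardPoly n x = (x - 1) * billiardQuot n x := by
  rw [billiardPoly, billiardQuot, mul_sub, mul_left_comm, mul_comm (x - 1), mul_comm (x - 1),
    geom_sum_mul, geom_sum_mul, two_mul, pow_add]
  ring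

lemma billiardPoly_succ {n : ℕ} (hn : 1 ≤ n) (x : ℝ) :
    billiardPoly (n + 1) x = x * billiardPoly n x + (1 - x) * (1 - x ^ (2 * n + 1)) := by
  obtain ⟨m, rfl⟩ := Nat.exists_eq_add_of_le' hn
  simp only [billiardPoly, Nat.add_sub_cancel]
  ring

lemma billiardQuot_zero {n : ℕ} (hn : 2 ≤ n) : billiardQuot n 0 = -1 := by
  obtain ⟨m, rfl⟩ := Nat.exists_eq_add_of_le' hn
  simp [billiardQuot, sum_range_succ']

lemma billiardQuot_one {n : ℕ} (hn : 1 ≤ n) : billiardQuot n 1 = 1 := by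
  obtain ⟨m, rfl⟩ := Nat.exists_eq_add_of_le' hn
  simp only [billiardQuot, one_pow, sum_const, card_range, nsmul_eq_mul, mul_one,
    Nat.add_sub_cancel]
  push_cast
  ring

lemma billiardQuot_pos_of_root {n : ℕ} (hn : 1 ≤ n) {l x : ℝ} (hl : 0 ≤ l) (hlx : l < x)
    (hql : billiardQuot n l = 0) : 0 < billiardQuot n x := by
  obtain rfl | hn2 := hn.eq_or_lt
  · simpa [billiardQuot] using hl.trans_lt hlx
  have hl0 : 0 < l := hl.lt_of_ne (by rintro rfl; simp [billiardQuot_zero hn2] at hql)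
  have key := pow_mul_geomSum_mul_geomSum_lt hl0 hlx (n := n) (r := n) (s := n - 1)
    (by omega) (by omega) (by omega)
  have hSl : 0 < ∑ k ∈ range (n - 1), l ^ k :=
    sum_pos (fun k _ => pow_pos hl0 k) (nonempty_range_iff.2 (by omega))
  rw [billiardQuot, sub_eq_zero] at hql
  rw [hql, mul_comm] at key
  rw [billiardQuot, sub_pos]
  exact lt_of_mul_lt_mul_right key hSl.le

lemma billiardPoly_neg_of_root {n : ℕ} (hn : 1 ≤ n) {l : ℝ} (hl : l ∈ Set.Ico (0 : ℝ) 1)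
    (hpl : billiardPoly n l = 0) {x : ℝ} (hx : x ∈ Set.Ioo l 1) : billiardPoly n x < 0 := by
  rw [billiardPoly_eq_sub_one_mul] at hpl ⊢
  have hql : billiardQuot n l = 0 :=
    (mul_eq_zero.1 hpl).resolve_left (sub_ne_zero.2 hl.2.ne)
  exact mul_neg_of_neg_of_pos (sub_neg.2 hx.2) (billiardQuot_pos_of_root hn hl.1 hx.1 hql)

lemma eq_of_billiardPoly_root {n : ℕ} (hn : 1 ≤ n) {a b : ℝ} (ha : a ∈ Set.Ico (0 : ℝ) 1)
    (hb : b ∈ Set.Ico (0 : ℝ) 1) (hpa : billiardPoly n a = 0) (hpb : billiardPoly n b = 0) :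
    a = b := by
  rcases lt_trichotomy a b with hab | hab | hab
  · exact absurd hpb (billiardPoly_neg_of_root hn ha hpa ⟨hab, hb.2⟩).ne
  · exact hab
  · exact absurd hpa (billiardPoly_neg_of_root hn hb hpb ⟨hab, ha.2⟩).ne

lemma lt_of_billiardPoly_pos {n : ℕ} (hn : 1 ≤ n) {l : ℝ} (hl : l ∈ Set.Ico (0 : ℝ) 1)
    (hpl : billiardPoly n l = 0) {y : ℝ} (hy : y < 1) (hpy : 0 < billiardPoly n y) : y < l := by
  by_contra! hly
  obtain rfl | hly := hly.eq_or_lt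
  · exact hpy.ne' hpl
  · exact hpy.not_gt (billiardPoly_neg_of_root hn hl hpl ⟨hly, hy⟩)

lemma lt_of_billiardPoly_root_succ {n : ℕ} (hn : 1 ≤ n) {l l' : ℝ}
    (hl : l ∈ Set.Ico (0 : ℝ) 1) (hpl : billiardPoly n l = 0) (hl' : l' ∈ Set.Ico (0 : ℝ) 1)
    (hpl' : billiardPoly (n + 1) l' = 0) : l < l' := by
  refine lt_of_billiardPoly_pos (by omega) hl' hpl' hl.2 ?_
  rw [billiardPoly_succ hn, hpl, mul_zero, zero_add]
  exact mul_pos (sub_pos.2 hl.2) (sub_pos.2 (pow_lt_one₀ hl.1 hl.2 (by omega)))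

lemma exists_billiardPoly_root {n : ℕ} (hn : 1 ≤ n) :
    ∃ x ∈ Set.Ico (0 : ℝ) 1, billiardPoly n x = 0 := by
  obtain rfl | hn2 := hn.eq_or_lt
  · exact ⟨0, ⟨le_rfl, one_pos⟩, by norm_num [billiardPoly]⟩
  have hcont : ContinuousOn (billiardQuot n) (Set.Icc 0 1) := by
    unfold billiardQuot
    fun_prop
  have hsign : (0 : ℝ) ∈ Set.Ioo (billiardQuot n 0) (billiardQuot n 1) := by
    rw [billiardQuot_zero hn2, billiardQuot_one hn]
    norm_num
  obtain ⟨x, hx, hqx⟩ := intermediate_value_Ioo zero_le_one hcont hsign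
  exact ⟨x, ⟨hx.1.le, hx.2⟩, by rw [billiardPoly_eq_sub_one_mul, hqx, mul_zero]⟩

lemma billiardPoly_pos_of_pow_lt {n : ℕ} {y : ℝ} (hy0 : 0 ≤ y) (hy1 : y ≤ 1)
    (hyn : y ^ (n - 1) < 1 / 2) : 0 < billiardPoly n y := by
  have hle : y ^ n ≤ y ^ (n - 1) := pow_le_pow_of_le_one hy0 hy1 (Nat.sub_le n 1)
  have := pow_nonneg hy0 (2 * n)
  unfold billiardPoly
  linarith

lemma eventually_lt_billiardPoly_root {L : ℕ → ℝ}
    (hL : ∀ n, 1 ≤ n → L n ∈ Set.Ico (0 : ℝ) 1 ∧ billiardPoly n (L n) = 0) {a : ℝ}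
    (ha : a < 1) : ∀ᶠ n in atTop, a < L n := by
  set y := max a 0
  have hy1 : y < 1 := max_lt ha one_pos
  have hsmall : ∀ᶠ n : ℕ in atTop, y ^ (n - 1) < 1 / 2 :=
    ((tendsto_pow_atTop_nhds_zero_of_lt_one (le_max_right a 0) hy1).comp
      (tendsto_sub_atTop_nat 1)).eventually (eventually_lt_nhds one_half_pos)
  filter_upwards [hsmall, eventually_ge_atTop 1] with n hyn hn
  have hpos := billiardPoly_pos_of_pow_lt (le_max_right a 0) hy1.le hyn
  exact (le_max_left a 0).trans_lt (lt_of_billiardPoly_pos hn (hL n hn).1 (hL n hn).2 hy1 hpos)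

theorem stmt15 :
    (∀ n : ℕ, 1 ≤ n →
      ∃! x : ℝ, x ∈ Set.Ico (0 : ℝ) 1 ∧ x ^ (2 * n) - x ^ n - x ^ (n - 1) + 1 = 0) ∧
    ∀ L : ℕ → ℝ,
      (∀ n, 1 ≤ n → L n ∈ Set.Ico (0 : ℝ) 1 ∧
        (L n) ^ (2 * n) - (L n) ^ n - (L n) ^ (n - 1) + 1 = 0) →
      (∀ n, 1 ≤ n → ∀ x ∈ Set.Ioo (L n) 1, x ^ (2 * n) - x ^ n - x ^ (n - 1) + 1 < 0) ∧
      StrictMonoOn L (Set.Ici 1) ∧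
      Tendsto L atTop (𝓝 1) := by
  refine ⟨fun n hn => ?_, fun L hL => ?_⟩
  · obtain ⟨x, hx, hpx⟩ := exists_billiardPoly_root hn
    exact ⟨x, ⟨hx, hpx⟩, fun y hy => eq_of_billiardPoly_root hn hy.1 hx hy.2 hpx⟩
  have hL' : ∀ n, 1 ≤ n → L n ∈ Set.Ico (0 : ℝ) 1 ∧ billiardPoly n (L n) = 0 := hL
  have hstep : ∀ n, 1 ≤ n → L n < L (n + 1) := fun n hn =>
    lt_of_billiardPoly_root_succ hn (hL' n hn).1 (hL' n hn).2 (hL' (n + 1) (by omega)).1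
      (hL' (n + 1) (by omega)).2
  refine ⟨fun n hn x hx => billiardPoly_neg_of_root hn (hL' n hn).1 (hL' n hn).2 hx,
    strictMonoOn_of_lt_add_one Set.ordConnected_Ici fun n _ hn _ => hstep n hn, ?_⟩
  refine tendsto_order.2 ⟨fun a ha => eventually_lt_billiardPoly_root hL' ha, fun a ha => ?_⟩
  filter_upwards [eventually_ge_atTop 1] with n hn
  exact (hL' n hn).1.2.trans ha
end

section
/- For each n ≥ 0, the polynomial p_n(x) = x^{4n+4} - x^{3n+3} + x^{2n+2} - x^{2n+1} - x^{n+1} + 1 has exactly one root γ_n in [0,1); moreover p_n(x) < 0 for all x ∈ (γ_n, 1), the sequence (γ_n) is strictly increasing, and γ_n → 1 as n → ∞. -/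
/-!
Write `p_n = (x - 1) q_n`. Dividing `q_n` by `x ^ (2n+1)` leaves only positive powers of `x` with
coefficient `+1` and negative powers with coefficient `-1`, so `r_n = q_n / x ^ (2n+1)` is strictly
increasing on `(0, ∞)`. Since `q_n(0) = -1` and `q_n(1) = 1`, `q_n` has exactly one root `γ_n` in
`(0, 1)` and is positive beyond it, so `p_n < 0` on `(γ_n, 1)`.
The identity `p_{n+1} - x² p_n = (1 - x)(1 - x^{2n+3})((1 + x)(1 + x^{2n+3}) - x^{n+2})` gives
`p_{n+1}(γ_n) > 0`, hence `γ_n < γ_{n+1}`; and `p_n(a) → 1` for fixed `a ∈ [0, 1)`, hence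
eventually `a < γ_n`.
-/

open Filter Topology Finset

section ZPowSums

variable {K : Type*} [Field K] [LinearOrder K] [IsStrictOrderedRing K] {ι : Type*}
  {s : Finset ι} {e : ι → ℤ}

lemma strictMonoOn_sum_zpow (hs : s.Nonempty) (he : ∀ i ∈ s, 0 < e i) :
    StrictMonoOn (fun x : K => ∑ i ∈ s, x ^ e i) (Set.Ioi 0) := fun _ hx _ _ hxy =>
  sum_lt_sum_of_nonempty hs fun i hi => zpow_lt_zpow_left₀ (he i hi) (le_of_lt hx) hxy

lemma strictAntiOn_sum_zpow (hs : s.Nonempty) (he : ∀ i ∈ s, e i < 0) :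
    StrictAntiOn (fun x : K => ∑ i ∈ s, x ^ e i) (Set.Ioi 0) := fun x hx y hy hxy =>
  sum_lt_sum_of_nonempty hs fun i hi => by
    have h := inv_strictAntiOn (zpow_pos hx _) (zpow_pos hy _)
      (zpow_lt_zpow_left₀ (neg_pos.2 (he i hi)) (le_of_lt hx) hxy)
    simpa only [← zpow_neg, neg_neg] using h

end ZPowSums

lemma tendsto_pow_comp_nhds_zero {a : ℝ} (ha : |a| < 1) {f : ℕ → ℕ} (hf : ∀ n, n ≤ f n) :
    Tendsto (fun n => a ^ f n) atTop (𝓝 0) :=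
  (tendsto_pow_atTop_nhds_zero_of_abs_lt_one ha).comp (tendsto_atTop_mono hf tendsto_id)

namespace OuterBilliard

def p (n : ℕ) (x : ℝ) : ℝ :=
  x ^ (4 * n + 4) - x ^ (3 * n + 3) + x ^ (2 * n + 2) - x ^ (2 * n + 1) - x ^ (n + 1) + 1

def q (n : ℕ) (x : ℝ) : ℝ :=
  ∑ i ∈ Ico (3 * n + 3) (4 * n + 4), x ^ i + x ^ (2 * n + 1) - ∑ i ∈ range (n + 1), x ^ i

noncomputable def r (n : ℕ) (x : ℝ) : ℝ := q n x / x ^ (2 * n + 1)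

variable {n : ℕ} {x c : ℝ}

lemma p_eq_mul_q (n : ℕ) (x : ℝ) : p n x = (x - 1) * q n x := by
  have hI := geom_sum_Ico_mul x (show 3 * n + 3 ≤ 4 * n + 4 by omega)
  have hR := geom_sum_mul x (n + 1)
  unfold p q
  linear_combination hR - hI

lemma p_zero (n : ℕ) : p n 0 = 1 := by simp [p]

lemma q_zero (n : ℕ) : q n 0 = -1 := by
  rw [q, sum_eq_zero fun i hi => zero_pow (by rw [Finset.mem_Ico] at hi; omega)]
  simp

lemma q_one (n : ℕ) : q n 1 = 1 := by
  simp only [q, one_pow, sum_const, Nat.card_Ico, card_range, nsmul_one]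
  rw [show 4 * n + 4 - (3 * n + 3) = n + 1 by omega]
  ring

lemma continuous_q (n : ℕ) : Continuous (q n) := by
  unfold q; fun_prop

lemma exists_q_eq_zero (n : ℕ) : ∃ x ∈ Set.Ioo (0 : ℝ) 1, q n x = 0 :=
  intermediate_value_Ioo zero_le_one (continuous_q n).continuousOn
    (show (0 : ℝ) ∈ Set.Ioo (q n 0) (q n 1) by simp [q_zero, q_one])

lemma r_eq_sum_zpow (hx : x ≠ 0) :
    r n x = ∑ i ∈ Ico (3 * n + 3) (4 * n + 4), x ^ ((i : ℤ) - (2 * n + 1)) + 1 -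
      ∑ i ∈ range (n + 1), x ^ ((i : ℤ) - (2 * n + 1)) := by
  simp only [r, q, zpow_sub₀ hx, zpow_natCast, ← sum_div, sub_div, add_div]
  rw [div_self (pow_ne_zero _ hx)]
  norm_cast

lemma strictMonoOn_r (n : ℕ) : StrictMonoOn (r n) (Set.Ioi 0) := by
  have hpos := strictMonoOn_sum_zpow (K := ℝ) (s := Ico (3 * n + 3) (4 * n + 4))
    (e := fun i : ℕ => (i : ℤ) - (2 * n + 1)) (nonempty_Ico.2 (by omega)) fun i hi => by
      simp only [Finset.mem_Ico] at hi; omega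
  have hneg := strictAntiOn_sum_zpow (K := ℝ) (s := range (n + 1))
    (e := fun i : ℕ => (i : ℤ) - (2 * n + 1)) (by simp) fun i hi => by
      simp only [Finset.mem_range] at hi; omega
  intro x hx y hy hxy
  rw [r_eq_sum_zpow (ne_of_gt hx), r_eq_sum_zpow (ne_of_gt hy)]
  linarith [hpos hx hy hxy, hneg hx hy hxy]

lemma q_eq_pow_mul_r (hx : x ≠ 0) : q n x = x ^ (2 * n + 1) * r n x :=
  (mul_div_cancel₀ _ (pow_ne_zero _ hx)).symm

lemma q_pos_of_root_lt (hc : 0 < c) (hqc : q n c = 0) (hcx : c < x) : 0 < q n x := by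
  have hx : 0 < x := hc.trans hcx
  have hr : r n c < r n x := strictMonoOn_r n hc hx hcx
  rw [r, hqc, zero_div] at hr
  rw [q_eq_pow_mul_r hx.ne']
  exact mul_pos (pow_pos hx _) hr

lemma pos_and_q_eq_zero_of_p_eq_zero (hx : x ∈ Set.Ico 0 1) (hpx : p n x = 0) :
    0 < x ∧ q n x = 0 := by
  have hx0 : x ≠ 0 := by
    rintro rfl
    simp [p_zero] at hpx
  rw [p_eq_mul_q] at hpx
  exact ⟨lt_of_le_of_ne hx.1 hx0.symm,
    (mul_eq_zero.1 hpx).resolve_left (sub_ne_zero.2 (ne_of_lt hx.2))⟩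

lemma p_neg_of_root_lt (hc : c ∈ Set.Ico 0 1) (hpc : p n c = 0) (hcx : c < x) (hx : x < 1) :
    p n x < 0 := by
  obtain ⟨hc0, hqc⟩ := pos_and_q_eq_zero_of_p_eq_zero hc hpc
  rw [p_eq_mul_q]
  exact mul_neg_of_neg_of_pos (sub_neg.2 hx) (q_pos_of_root_lt hc0 hqc hcx)

lemma lt_root_of_p_pos (hc : c ∈ Set.Ico 0 1) (hpc : p n c = 0) (hx : x < 1) (hpx : 0 < p n x) :
    x < c := by
  by_contra! hcx
  rcases hcx.eq_or_lt with rfl | hcx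
  · exact hpx.ne' hpc
  · exact (p_neg_of_root_lt hc hpc hcx hx).not_gt hpx

lemma existsUnique_root (n : ℕ) : ∃! x, x ∈ Set.Ico (0 : ℝ) 1 ∧ p n x = 0 := by
  obtain ⟨c, hc, hqc⟩ := exists_q_eq_zero n
  refine ⟨c, ⟨Set.Ioo_subset_Ico_self hc, by rw [p_eq_mul_q, hqc, mul_zero]⟩, ?_⟩
  rintro y ⟨hy, hpy⟩
  obtain ⟨hy0, hqy⟩ := pos_and_q_eq_zero_of_p_eq_zero hy hpy
  rcases lt_trichotomy y c with hyc | rfl | hcy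
  · exact absurd hqc (q_pos_of_root_lt hy0 hqy hyc).ne'
  · rfl
  · exact absurd hqy (q_pos_of_root_lt hc.1 hqc hcy).ne'

lemma sq_mul_p_lt_p_succ (hx0 : 0 < x) (hx1 : x < 1) : x ^ 2 * p n x < p (n + 1) x := by
  have hb : x ^ (2 * n + 3) < 1 := pow_lt_one₀ hx0.le hx1 (by omega)
  have ha : x ^ (n + 2) < 1 := pow_lt_one₀ hx0.le hx1 (by omega)
  have hfactor : 0 < (1 + x) * (1 + x ^ (2 * n + 3)) - x ^ (n + 2) := by
    nlinarith [pow_pos hx0 (2 * n + 3)]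
  have key : p (n + 1) x - x ^ 2 * p n x =
      (1 - x) * (1 - x ^ (2 * n + 3)) * ((1 + x) * (1 + x ^ (2 * n + 3)) - x ^ (n + 2)) := by
    unfold p; ring
  have := mul_pos (mul_pos (sub_pos.2 hx1) (sub_pos.2 hb)) hfactor
  linarith

lemma strictMono_of_forall_root {G : ℕ → ℝ} (hG : ∀ n, G n ∈ Set.Ico 0 1 ∧ p n (G n) = 0) :
    StrictMono G := by
  refine strictMono_nat_of_lt_succ fun n => ?_
  have hpos := (pos_and_q_eq_zero_of_p_eq_zero (hG n).1 (hG n).2).1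
  have hp := sq_mul_p_lt_p_succ (n := n) hpos (hG n).1.2
  rw [(hG n).2, mul_zero] at hp
  exact lt_root_of_p_pos (hG (n + 1)).1 (hG (n + 1)).2 (hG n).1.2 hp

lemma tendsto_p_atTop {a : ℝ} (ha : |a| < 1) : Tendsto (fun n => p n a) atTop (𝓝 1) := by
  have h := ((((tendsto_pow_comp_nhds_zero ha (f := fun n => 4 * n + 4) (by omega)).sub
    (tendsto_pow_comp_nhds_zero ha (f := fun n => 3 * n + 3) (by omega))).add
    (tendsto_pow_comp_nhds_zero ha (f := fun n => 2 * n + 2) (by omega))).sub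
    (tendsto_pow_comp_nhds_zero ha (f := fun n => 2 * n + 1) (by omega))).sub
    (tendsto_pow_comp_nhds_zero ha (f := fun n => n + 1) (by omega))
  simpa [p] using h.add_const 1

lemma tendsto_of_forall_root {G : ℕ → ℝ} (hG : ∀ n, G n ∈ Set.Ico 0 1 ∧ p n (G n) = 0) :
    Tendsto G atTop (𝓝 1) := by
  refine tendsto_order.2
    ⟨fun a ha => ?_, fun a ha => Eventually.of_forall fun n => (hG n).1.2.trans ha⟩
  have hb : |max a 0| < 1 := abs_lt.2 ⟨by linarith [le_max_right a 0], max_lt ha one_pos⟩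
  filter_upwards [(tendsto_p_atTop hb).eventually (lt_mem_nhds one_pos)] with n hn
  exact (le_max_left a 0).trans_lt (lt_root_of_p_pos (hG n).1 (hG n).2 (max_lt ha one_pos) hn)

end OuterBilliard

theorem stmt16 :
    (∀ n : ℕ,
      ∃! x : ℝ, x ∈ Set.Ico (0 : ℝ) 1 ∧
        x ^ (4 * n + 4) - x ^ (3 * n + 3) + x ^ (2 * n + 2) - x ^ (2 * n + 1) - x ^ (n + 1) + 1 = 0) ∧
    ∀ G : ℕ → ℝ,
      (∀ n, G n ∈ Set.Ico (0 : ℝ) 1 ∧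
        (G n) ^ (4 * n + 4) - (G n) ^ (3 * n + 3) + (G n) ^ (2 * n + 2) -
          (G n) ^ (2 * n + 1) - (G n) ^ (n + 1) + 1 = 0) →
      (∀ n, ∀ x ∈ Set.Ioo (G n) 1,
        x ^ (4 * n + 4) - x ^ (3 * n + 3) + x ^ (2 * n + 2) - x ^ (2 * n + 1) - x ^ (n + 1) + 1 < 0) ∧
      StrictMono G ∧
      Tendsto G atTop (𝓝 1) :=
  ⟨OuterBilliard.existsUnique_root, fun _ hG =>
    ⟨fun n _ hx => OuterBilliard.p_neg_of_root_lt (hG n).1 (hG n).2 hx.1 hx.2,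
      OuterBilliard.strictMono_of_forall_root hG, OuterBilliard.tendsto_of_forall_root hG⟩⟩
end

section
/- For each n ≥ 1 with q_n(x) = x^{2n-1} + ⋯ + xⁿ - x^{n-2} - ⋯ - 1 and λ_{n+1} the unique root of q_{n+1} in (0,1): q_n(λ_{n+1}) = λ_{n+1}^{n-1}(1 + λ_{n+1} - λ_{n+1}^{n+1} - λ_{n+1}^{n+2}) > 0. -/
/-! Multiplying by `x - 1` turns `q n` into `p n x = x^(2n) - x^n - x^(n-1) + 1`, and
`p n x - x^(n-1) (x - 1) (1 + x - x^(n+1) - x^(n+2)) = p (n+1) x`, which vanishes at `λ_{n+1}`.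
The positivity then comes from `1 + x - x^(n+1) - x^(n+2) = (1 + x)(1 - x^(n+1))`. -/

open Finset

section

variable {R : Type*}

def q [CommRing R] (n : ℕ) (x : R) : R :=
  ∑ j ∈ Icc n (2 * n - 1), x ^ j - ∑ j ∈ range (n - 1), x ^ j

theorem q_succ_mul_sub_one [CommRing R] (n : ℕ) (x : R) :
    q (n + 1) x * (x - 1) = x ^ (2 * n + 2) - x ^ (n + 1) - x ^ n + 1 := by
  have hIcc : Icc (n + 1) (2 * (n + 1) - 1) = Ico (n + 1) (2 * n + 2) :=
    (Ico_add_one_right_eq_Icc _ _).symm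
  rw [q, hIcc, Nat.add_sub_cancel, sub_mul, geom_sum_Ico_mul x (by omega), geom_sum_mul]
  ring

theorem q_succ_eq_of_q_succ_succ_eq_zero [CommRing R] [IsDomain R] {n : ℕ} {x : R}
    (hx : x ≠ 1) (hroot : q (n + 2) x = 0) :
    q (n + 1) x = x ^ n * (1 + x - x ^ (n + 2) - x ^ (n + 3)) := by
  refine mul_right_cancel₀ (sub_ne_zero.2 hx) ?_
  have hp := q_succ_mul_sub_one (n + 1) x
  rw [hroot, zero_mul] at hp
  rw [q_succ_mul_sub_one]
  linear_combination -hp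

end

theorem stmt17 (n : ℕ) (hn : 1 ≤ n) (μ : ℝ) (hμ : μ ∈ Set.Ioo (0 : ℝ) 1)
    (hroot : (∑ j ∈ Finset.Icc (n + 1) (2 * n + 1), μ ^ j) - ∑ j ∈ Finset.range n, μ ^ j = 0) :
    (∑ j ∈ Finset.Icc n (2 * n - 1), μ ^ j) - (∑ j ∈ Finset.range (n - 1), μ ^ j)
      = μ ^ (n - 1) * (1 + μ - μ ^ (n + 1) - μ ^ (n + 2)) ∧
    0 < (∑ j ∈ Finset.Icc n (2 * n - 1), μ ^ j) - ∑ j ∈ Finset.range (n - 1), μ ^ j := by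
  obtain ⟨m, rfl⟩ := Nat.exists_eq_add_of_le' hn
  obtain ⟨hμ0, hμ1⟩ := hμ
  have hq : q (m + 1) μ = μ ^ m * (1 + μ - μ ^ (m + 2) - μ ^ (m + 3)) :=
    q_succ_eq_of_q_succ_succ_eq_zero hμ1.ne hroot
  change q (m + 1) μ = _ ∧ 0 < q (m + 1) μ
  rw [hq, Nat.add_sub_cancel, show 1 + μ - μ ^ (m + 2) - μ ^ (m + 3)
    = (1 + μ) * (1 - μ ^ (m + 2)) by ring]
  refine ⟨rfl, mul_pos (pow_pos hμ0 m) (mul_pos (by linarith) ?_)⟩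
  exact sub_pos.2 (pow_lt_one₀ hμ0.le hμ1 (by omega))
end

section
/- Let T be a map on a compact set K that is continuous and uniformly contracting on each connected component Y₁,…,Y_m of K ∖ S_n, where S_n is a finite union of lines, and suppose T maps each component Y_i into some component Y_{j(i)}. Then the ω-limit set of T consists of at most m points; in particular it is finite. -/
/-!
Let `R c = {e | j^[e] c = c}` be the return times of the component `Y c`. For `e ≤ e'` in `R c`,
`T^[e'] (Y c) = T^[e] (T^[e' - e] (Y c)) ⊆ T^[e] (Y c)`, a set of diameter at most
`ρ ^ e * diam (Y c)`, so the ω-limit of `Y c` along the times `R c` is at most one point.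
An orbit starting in `Y i` that is in `Y c` at time `n₀` continues as an orbit of `Y c`, and its
later visits to `Y c` happen at the times `n₀ + R c`. Splitting the ω-limit of `⋃ i, Y i` over the
starting component `i` and over the component visited at time `n` therefore puts it inside a
union of `m` such sets.
-/

open Set Filter Topology Metric omegaLimit

section OmegaLimit

variable {τ α β ι : Type*} [TopologicalSpace β] [Finite ι] {f : Filter τ} {ϕ : τ → α → β}
  {s : Set α}

theorem omegaLimit_bot : ω ⊥ ϕ s = ∅ :=
  subset_empty_iff.1 <| by
    simpa using omegaLimit_subset_closure_image2 ⊥ ϕ s (mem_bot (s := ∅))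

theorem omegaLimit_iUnion_subset_of_finite (p : ι → Set α) :
    ω f ϕ (⋃ i, p i) ⊆ ⋃ i, ω f ϕ (p i) := by
  intro y hy
  by_contra hy'
  simp only [mem_iUnion, not_exists, omegaLimit_def, mem_iInter₂, not_forall] at hy'
  choose u hu hyu using hy'
  have hy := omegaLimit_subset_closure_image2 _ _ _ (iInter_mem.2 hu) hy
  rw [image2_iUnion_right, closure_iUnion_of_finite, mem_iUnion] at hy
  obtain ⟨i, hi⟩ := hy
  exact hyu i (closure_mono (image2_subset_right (iInter_subset u i)) hi)

theorem omegaLimit_subset_iUnion_fiber (g : τ → ι) :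
    ω f ϕ s ⊆ ⋃ c, ω (f ⊓ 𝓟 (g ⁻¹' {c})) ϕ s := by
  intro y hy
  by_contra hy'
  simp only [mem_iUnion, not_exists, omegaLimit_def, mem_iInter₂, not_forall] at hy'
  choose u hu hyu using hy'
  simp only [mem_inf_principal] at hu
  have hy := omegaLimit_subset_closure_image2 _ _ _ (iInter_mem.2 hu) hy
  have hsub : (⋂ c, {t | t ∈ g ⁻¹' {c} → t ∈ u c}) ⊆ ⋃ c, u c := fun t ht =>
    mem_iUnion.2 ⟨g t, mem_iInter.1 ht (g t) rfl⟩
  replace hy := closure_mono (image2_subset_right hsub) hy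
  rw [image2_iUnion_left, closure_iUnion_of_finite, mem_iUnion] at hy
  obtain ⟨c, hc⟩ := hy
  exact hyu c hc

end OmegaLimit

section IteratesOfFamily

open Function

variable {α ι : Type*} {Y : ι → Set α} {T : α → α} {j : ι → ι} {ρ : ℝ}

theorem mapsTo_iterate_of_forall_mapsTo (hmap : ∀ i, MapsTo T (Y i) (Y (j i))) :
    ∀ n i, MapsTo T^[n] (Y i) (Y (j^[n] i))
  | 0, _ => mapsTo_id _
  | n + 1, i => (mapsTo_iterate_of_forall_mapsTo hmap n (j i)).comp (hmap i)

theorem omegaLimit_fiber_subset_omegaLimit_isPeriodicPt [TopologicalSpace α]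
    (hmap : ∀ i, MapsTo T (Y i) (Y (j i))) (i c : ι) :
    ω (atTop ⊓ 𝓟 ((fun n => j^[n] i) ⁻¹' {c})) (fun n x => T^[n] x) (Y i) ⊆
      ω (atTop ⊓ 𝓟 {e | IsPeriodicPt j e c}) (fun n x => T^[n] x) (Y c) := by
  by_cases hvisit : ∃ n₀, j^[n₀] i = c
  swap
  · simp only [not_exists] at hvisit
    have : (fun n => j^[n] i) ⁻¹' {c} = ∅ := eq_empty_of_forall_notMem hvisit
    simp [this, omegaLimit_bot]
  obtain ⟨n₀, hn₀⟩ := hvisit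
  intro y hy
  simp only [omegaLimit_def, mem_iInter₂] at hy ⊢
  intro v hv
  obtain ⟨N, hN⟩ := mem_atTop_sets.1 (mem_inf_principal.1 hv)
  have hu : {n | n₀ ≤ n ∧ n - n₀ ∈ v} ∈ atTop ⊓ 𝓟 ((fun n => j^[n] i) ⁻¹' {c}) := by
    refine mem_inf_principal.2 (mem_atTop_sets.2 ⟨N + n₀, fun n hn hjn =>
      ⟨by omega, hN _ (by omega) ?_⟩⟩)
    calc j^[n - n₀] c = j^[n] i := by
          rw [← hn₀, ← iterate_add_apply, Nat.sub_add_cancel (by omega)]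
      _ = c := hjn
  refine closure_mono ?_ (hy _ hu)
  rintro _ ⟨n, ⟨hn₀n, hnv⟩, x, hx, rfl⟩
  refine ⟨n - n₀, hnv, T^[n₀] x, hn₀ ▸ mapsTo_iterate_of_forall_mapsTo hmap n₀ i hx, ?_⟩
  simp only [← iterate_add_apply, Nat.sub_add_cancel hn₀n]

theorem dist_iterate_le_of_mapsTo [PseudoMetricSpace α] (hmap : ∀ i, MapsTo T (Y i) (Y (j i)))
    (hρ0 : 0 ≤ ρ)
    (hcontr : ∀ i, ∀ x ∈ Y i, ∀ y ∈ Y i, dist (T x) (T y) ≤ ρ * dist x y) :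
    ∀ n i, ∀ x ∈ Y i, ∀ y ∈ Y i, dist (T^[n] x) (T^[n] y) ≤ ρ ^ n * dist x y
  | 0, _, _, _, _, _ => by simp
  | n + 1, i, x, hx, y, hy => calc
      dist (T^[n] (T x)) (T^[n] (T y)) ≤ ρ ^ n * dist (T x) (T y) :=
        dist_iterate_le_of_mapsTo hmap hρ0 hcontr n (j i) _ (hmap i hx) _ (hmap i hy)
      _ ≤ ρ ^ n * (ρ * dist x y) := by gcongr; exact hcontr i x hx y hy
      _ = ρ ^ (n + 1) * dist x y := by ring

theorem dist_iterate_periodicPt_le [PseudoMetricSpace α] (hmap : ∀ i, MapsTo T (Y i) (Y (j i)))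
    (hρ0 : 0 ≤ ρ)
    (hcontr : ∀ i, ∀ x ∈ Y i, ∀ y ∈ Y i, dist (T x) (T y) ≤ ρ * dist x y) {c : ι}
    (hYc : Bornology.IsBounded (Y c)) {e e' : ℕ} (hee' : e ≤ e') (he : IsPeriodicPt j e c)
    (he' : IsPeriodicPt j e' c) {w w' : α} (hw : w ∈ Y c) (hw' : w' ∈ Y c) :
    dist (T^[e] w) (T^[e'] w') ≤ ρ ^ e * diam (Y c) := by
  have hw'' : T^[e' - e] w' ∈ Y c := by
    simpa [(he'.sub he).eq] using mapsTo_iterate_of_forall_mapsTo hmap (e' - e) c hw'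
  calc dist (T^[e] w) (T^[e'] w') = dist (T^[e] w) (T^[e] (T^[e' - e] w')) := by
        rw [← iterate_add_apply, Nat.add_sub_cancel' hee']
    _ ≤ ρ ^ e * dist w (T^[e' - e] w') :=
        dist_iterate_le_of_mapsTo hmap hρ0 hcontr e c _ hw _ hw''
    _ ≤ ρ ^ e * diam (Y c) := by gcongr; exact dist_le_diam_of_mem hYc hw hw''

theorem omegaLimit_isPeriodicPt_subsingleton [MetricSpace α]
    (hmap : ∀ i, MapsTo T (Y i) (Y (j i))) (hρ0 : 0 ≤ ρ) (hρ1 : ρ < 1)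
    (hcontr : ∀ i, ∀ x ∈ Y i, ∀ y ∈ Y i, dist (T x) (T y) ≤ ρ * dist x y) {c : ι}
    (hYc : Bornology.IsBounded (Y c)) :
    (ω (atTop ⊓ 𝓟 {e | IsPeriodicPt j e c}) (fun n x => T^[n] x) (Y c)).Subsingleton := by
  intro y hy y' hy'
  have hsmall : ∀ N, dist y y' ≤ ρ ^ N * diam (Y c) := by
    intro N
    set S : Set α := image2 (fun n x => T^[n] x) ({e | IsPeriodicPt j e c} ∩ Ici N) (Y c)
    have hS : ∀ a ∈ S, ∀ b ∈ S, dist a b ≤ ρ ^ N * diam (Y c) := by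
      rintro _ ⟨e, ⟨he, hNe⟩, w, hw, rfl⟩ _ ⟨e', ⟨he', hNe'⟩, w', hw', rfl⟩
      wlog hee' : e ≤ e' generalizing e e' w w'
      · rw [dist_comm]; exact this e' he' hNe' w' hw' e he hNe w hw (le_of_not_ge hee')
      exact (dist_iterate_periodicPt_le hmap hρ0 hcontr hYc hee' he he' hw hw').trans
        (mul_le_mul_of_nonneg_right (pow_le_pow_of_le_one hρ0 hρ1.le hNe) diam_nonneg)
    have hSmem : {e | IsPeriodicPt j e c} ∩ Ici N ∈ atTop ⊓ 𝓟 {e | IsPeriodicPt j e c} :=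
      inter_mem (mem_inf_of_right (mem_principal_self _)) (mem_inf_of_left (Ici_mem_atTop N))
    have hSclosure := omegaLimit_subset_closure_image2 _ (fun n x => T^[n] x) (Y c) hSmem
    calc dist y y' ≤ diam (closure S) :=
          dist_le_diam_of_mem (isBounded_iff.2 ⟨_, hS⟩).closure (hSclosure hy) (hSclosure hy')
      _ ≤ ρ ^ N * diam (Y c) := by
          rw [diam_closure]
          exact diam_le_of_forall_dist_le (by positivity) hS
  have hlim : Tendsto (fun N => ρ ^ N * diam (Y c)) atTop (𝓝 0) := by
    simpa using (tendsto_pow_atTop_nhds_zero_of_lt_one hρ0 hρ1).mul_const (diam (Y c))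
  exact dist_le_zero.1 (ge_of_tendsto' hlim hsmall)

end IteratesOfFamily

theorem stmt19 {X : Type*} [MetricSpace X] (K : Set X) (hK : IsCompact K)
    (m : ℕ) (Y : Fin m → Set X) (T : X → X) (j : Fin m → Fin m) (ρ : ℝ)
    (hρ0 : 0 ≤ ρ) (hρ1 : ρ < 1)
    (hYK : ∀ i, Y i ⊆ K)
    (hmap : ∀ i, T '' Y i ⊆ Y (j i))
    (hcontr : ∀ i, ∀ x ∈ Y i, ∀ y ∈ Y i, dist (T x) (T y) ≤ ρ * dist x y) :
    ∃ F : Set X, F.Finite ∧ F.ncard ≤ m ∧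
      omegaLimit Filter.atTop (fun n (x : X) => T^[n] x) (⋃ i, Y i) ⊆ F := by
  have hmap' : ∀ i, MapsTo T (Y i) (Y (j i)) := fun i => mapsTo_iff_image_subset.2 (hmap i)
  set A : Fin m → Set X := fun c =>
    ω (atTop ⊓ 𝓟 {e | Function.IsPeriodicPt j e c}) (fun n x => T^[n] x) (Y c)
  have hA : ∀ c, (A c).Subsingleton := fun c =>
    omegaLimit_isPeriodicPt_subsingleton hmap' hρ0 hρ1 hcontr (hK.isBounded.subset (hYK c))
  refine ⟨⋃ c, A c, finite_iUnion fun c => (hA c).finite, ?_, ?_⟩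
  · calc (⋃ c, A c).ncard ≤ ∑ c, (A c).ncard := ncard_iUnion_le_of_fintype A
      _ ≤ ∑ _c : Fin m, 1 := Finset.sum_le_sum fun c _ => (ncard_le_one (hA c).finite).2 (hA c)
      _ = m := by simp
  · calc ω atTop (fun n x => T^[n] x) (⋃ i, Y i) ⊆ ⋃ i, ω atTop (fun n x => T^[n] x) (Y i) :=
          omegaLimit_iUnion_subset_of_finite Y
      _ ⊆ ⋃ i, ⋃ c, ω (atTop ⊓ 𝓟 ((fun n => j^[n] i) ⁻¹' {c})) (fun n x => T^[n] x) (Y i) :=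
          iUnion_mono fun i => omegaLimit_subset_iUnion_fiber _
      _ ⊆ ⋃ c, A c := iUnion_subset fun i => iUnion_mono fun c =>
          omegaLimit_fiber_subset_omegaLimit_isPeriodicPt hmap' i c
end
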